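/- If a finite connected graph G contains an induced subgraph isomorphic to the claw K_{1,3} or to the diamond K_4 \ {e}, then QEC(G) ≥ -1/2. -/
import Mathlib


/-- The quadratic embedding constant of a finite graph. -/
noncomputable def QEC {V : Type*} [Fintype V] (G : SimpleGraph V) : ℝ :=
  sSup {x : ℝ | ∃ f : V → ℝ,
    (∑ i, f i ^ 2) = 1 ∧ (∑ i, f i) = 0 ∧
    x = ∑ i, ∑ j, (G.dist i j : ℝ) * f i * f j}

/-- The claw K_{1,3}: vertex 0 is adjacent to each of the three leaves. -/
def claw : SimpleGraph (Fin 4) := SimpleGraph.fromRel (fun i _ => i = 0)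

/-- The diamond K_4 \ {e}: the complete graph on 4 vertices minus the edge {2,3}. -/
def diamond : SimpleGraph (Fin 4) :=
  SimpleGraph.fromRel (fun i j => ({i, j} : Finset (Fin 4)) ≠ {2, 3})

section Aux

open Finset

/-- If `u ≠ v` are non-adjacent but have a common neighbor, distance is 2. -/
lemma aux_dist_two {V : Type*} {G : SimpleGraph V} (hG : G.Connected) {u v w : V}
    (hne : u ≠ v) (hnadj : ¬ G.Adj u v) (h1 : G.Adj u w) (h2 : G.Adj w v) :
    G.dist u v = 2 := by
  have hle : G.dist u v ≤ 2 := by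
    have := SimpleGraph.dist_le (h1.toWalk.append h2.toWalk)
    simpa using this
  have h0 : 0 < G.dist u v := hG.pos_dist_of_ne hne
  have h1' : G.dist u v ≠ 1 := by
    simp only [ne_eq, SimpleGraph.dist_eq_one_iff_adj]; exact hnadj
  omega

lemma aux_sum_witness_mul {V : Type*} [Fintype V] [DecidableEq V]
    (φ : Fin 4 ↪ V) (c : Fin 4 → ℝ) (g : V → ℝ) :
    ∑ v, (∑ i, if v = φ i then c i else 0) * g v = ∑ i, c i * g (φ i) := by
  calc ∑ v, (∑ i, if v = φ i then c i else 0) * g v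
      = ∑ v, ∑ i, (if v = φ i then c i * g v else 0) := by
        refine Finset.sum_congr rfl fun v _ => ?_
        rw [Finset.sum_mul]
        exact Finset.sum_congr rfl fun i _ => by rw [ite_mul, zero_mul]
    _ = ∑ i, ∑ v, (if v = φ i then c i * g v else 0) := Finset.sum_comm
    _ = ∑ i, c i * g (φ i) := by simp

/-- Membership witness for the QEC defining set. -/
lemma aux_mem_qec {V : Type*} [Fintype V] [DecidableEq V] (G : SimpleGraph V)
    (φ : Fin 4 ↪ V) (c : Fin 4 → ℝ) (D : Fin 4 → Fin 4 → ℕ)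
    (hD : ∀ i j, G.dist (φ i) (φ j) = D i j)
    (hc1 : ∑ i, c i ^ 2 = 1) (hc0 : ∑ i, c i = 0) :
    ∃ f : V → ℝ, (∑ i, f i ^ 2) = 1 ∧ (∑ i, f i) = 0 ∧
      (∑ i, ∑ j, (D i j : ℝ) * c i * c j) = ∑ i, ∑ j, (G.dist i j : ℝ) * f i * f j := by
  set f : V → ℝ := fun v => ∑ i, if v = φ i then c i else 0 with hf
  have key : ∀ g : V → ℝ, ∑ v, f v * g v = ∑ i, c i * g (φ i) :=
    aux_sum_witness_mul φ c
  have hfφ : ∀ i, f (φ i) = c i := by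
    intro i
    simp [hf, φ.injective.eq_iff]
  refine ⟨f, ?_, ?_, ?_⟩
  · calc ∑ v, f v ^ 2 = ∑ v, f v * f v := by
          exact Finset.sum_congr rfl fun v _ => sq (f v)
      _ = ∑ i, c i * f (φ i) := key f
      _ = ∑ i, c i ^ 2 := Finset.sum_congr rfl fun i _ => by rw [hfφ i, sq]
      _ = 1 := hc1
  · calc ∑ v, f v = ∑ v, f v * 1 := by simp
      _ = ∑ i, c i * 1 := key 1
      _ = 0 := by simpa using hc0
  · symm
    calc ∑ v, ∑ w, (G.dist v w : ℝ) * f v * f w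
        = ∑ v, f v * ∑ w, (G.dist v w : ℝ) * f w := by
          refine Finset.sum_congr rfl fun v _ => ?_
          rw [Finset.mul_sum]
          exact Finset.sum_congr rfl fun w _ => by ring
      _ = ∑ i, c i * ∑ w, (G.dist (φ i) w : ℝ) * f w :=
          key (fun v => ∑ w, (G.dist v w : ℝ) * f w)
      _ = ∑ i, ∑ j, (D i j : ℝ) * c i * c j := by
          refine Finset.sum_congr rfl fun i _ => ?_
          have : ∑ w, (G.dist (φ i) w : ℝ) * f w
              = ∑ w, f w * (G.dist (φ i) w : ℝ) := by
            exact Finset.sum_congr rfl fun w _ => by ring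
          rw [this, key (fun w => (G.dist (φ i) w : ℝ)), Finset.mul_sum]
          exact Finset.sum_congr rfl fun j _ => by rw [hD i j]; ring

def dC : Fin 4 → Fin 4 → ℕ := ![![0,1,1,1],![1,0,2,2],![1,2,0,2],![1,2,2,0]]
noncomputable def cC : Fin 4 → ℝ :=
  ![-(Real.sqrt 3)/2, Real.sqrt 3/6, Real.sqrt 3/6, Real.sqrt 3/6]
def dD : Fin 4 → Fin 4 → ℕ := ![![0,1,1,1],![1,0,1,1],![1,1,0,2],![1,1,2,0]]
noncomputable def cD : Fin 4 → ℝ := ![1/2, 1/2, -1/2, -1/2]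

end Aux

/-- if a finite connected graph contains an induced claw or an
induced diamond, then QEC(G) ≥ -1/2. -/
theorem qec_ge_neg_half_of_claw_or_diamond {V : Type*} [Fintype V]
    (G : SimpleGraph V) (hG : G.Connected)
    (h : (∃ φ : Fin 4 ↪ V, ∀ i j, G.Adj (φ i) (φ j) ↔ claw.Adj i j) ∨
         (∃ φ : Fin 4 ↪ V, ∀ i j, G.Adj (φ i) (φ j) ↔ diamond.Adj i j)) :
    -1/2 ≤ QEC G := by
  classical
  set S := {x : ℝ | ∃ f : V → ℝ,
    (∑ i, f i ^ 2) = 1 ∧ (∑ i, f i) = 0 ∧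
    x = ∑ i, ∑ j, (G.dist i j : ℝ) * f i * f j} with hS
  by_cases hb : BddAbove S
  · have hmem : (-1/2 : ℝ) ∈ S := by
      rcases h with ⟨φ, hφ⟩ | ⟨φ, hφ⟩
      · -- claw case
        have hadj : ∀ i j : Fin 4, claw.Adj i j ↔ i ≠ j ∧ (i = 0 ∨ j = 0) := by
          intro i j
          simp [claw, SimpleGraph.fromRel_adj]
        have hD : ∀ i j, G.dist (φ i) (φ j) = dC i j := by
          intro i j
          by_cases hij : i = j
          · subst hij; rw [SimpleGraph.dist_self]
            fin_cases i <;> rfl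
          · by_cases h0 : i = 0 ∨ j = 0
            · have : G.Adj (φ i) (φ j) := (hφ i j).mpr ((hadj i j).mpr ⟨hij, h0⟩)
              rw [SimpleGraph.dist_eq_one_iff_adj.mpr this]
              fin_cases i <;> fin_cases j <;>
                first
                | rfl
                | exact (hij rfl).elim
                | (rcases h0 with h | h <;> exact absurd h (by decide))
            · push_neg at h0
              obtain ⟨hi0, hj0⟩ := h0
              have h1 : G.Adj (φ i) (φ 0) :=
                (hφ i 0).mpr ((hadj i 0).mpr ⟨hi0, Or.inr rfl⟩)
              have h2 : G.Adj (φ 0) (φ j) :=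
                (hφ 0 j).mpr ((hadj 0 j).mpr ⟨fun e => hj0 e.symm, Or.inl rfl⟩)
              have hnadj : ¬ G.Adj (φ i) (φ j) := fun hA =>
                (((hadj i j).mp ((hφ i j).mp hA)).2).elim hi0 hj0
              have hne : φ i ≠ φ j := fun e => hij (φ.injective e)
              rw [aux_dist_two hG hne hnadj h1 h2]
              fin_cases i <;> fin_cases j <;>
                first
                | rfl
                | exact (hij rfl).elim
                | exact (hi0 rfl).elim
                | exact (hj0 rfl).elim
        have hc1 : ∑ i, cC i ^ 2 = 1 := by
          have h3 : Real.sqrt 3 ^ 2 = 3 := Real.sq_sqrt (by norm_num)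
          simp [Fin.sum_univ_four, cC, Matrix.vecHead, Matrix.vecTail]
          nlinarith [h3]
        have hc0 : ∑ i, cC i = 0 := by
          simp [Fin.sum_univ_four, cC, Matrix.vecHead, Matrix.vecTail]
          ring
        obtain ⟨f, hf1, hf0, hfq⟩ := aux_mem_qec G φ cC dC hD hc1 hc0
        refine ⟨f, hf1, hf0, ?_⟩
        rw [← hfq]
        have h3 : Real.sqrt 3 ^ 2 = 3 := Real.sq_sqrt (by norm_num)
        simp [Fin.sum_univ_four, cC, dC, Matrix.vecHead, Matrix.vecTail]
        nlinarith [h3]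
      · -- diamond case
        have hadj : ∀ i j : Fin 4,
            diamond.Adj i j ↔ i ≠ j ∧ ({i, j} : Finset (Fin 4)) ≠ {2, 3} := by
          intro i j
          simp [diamond, SimpleGraph.fromRel_adj, Finset.pair_comm j i]
        have hpair : ∀ i j : Fin 4, ({i, j} : Finset (Fin 4)) = {2, 3} ↔
            ((i = 2 ∧ j = 3) ∨ (i = 3 ∧ j = 2)) := by decide
        have hD : ∀ i j, G.dist (φ i) (φ j) = dD i j := by
          intro i j
          by_cases hij : i = j
          · subst hij; rw [SimpleGraph.dist_self]
            fin_cases i <;> rfl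
          · by_cases h0 : ({i, j} : Finset (Fin 4)) = {2, 3}
            · rcases (hpair i j).mp h0 with ⟨hi, hj⟩ | ⟨hi, hj⟩ <;> subst hi <;> subst hj
              · have h1 : G.Adj (φ 2) (φ 0) :=
                  (hφ 2 0).mpr ((hadj 2 0).mpr ⟨by decide, by decide⟩)
                have h2 : G.Adj (φ 0) (φ 3) :=
                  (hφ 0 3).mpr ((hadj 0 3).mpr ⟨by decide, by decide⟩)
                have hnadj : ¬ G.Adj (φ 2) (φ 3) := fun hA =>
                  (((hadj 2 3).mp ((hφ 2 3).mp hA)).2) (by decide)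
                have hne : φ 2 ≠ φ 3 := fun e => absurd (φ.injective e) (by decide)
                rw [aux_dist_two hG hne hnadj h1 h2]; rfl
              · have h1 : G.Adj (φ 3) (φ 0) :=
                  (hφ 3 0).mpr ((hadj 3 0).mpr ⟨by decide, by decide⟩)
                have h2 : G.Adj (φ 0) (φ 2) :=
                  (hφ 0 2).mpr ((hadj 0 2).mpr ⟨by decide, by decide⟩)
                have hnadj : ¬ G.Adj (φ 3) (φ 2) := fun hA =>
                  (((hadj 3 2).mp ((hφ 3 2).mp hA)).2) (by decide)
                have hne : φ 3 ≠ φ 2 := fun e => absurd (φ.injective e) (by decide)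
                rw [aux_dist_two hG hne hnadj h1 h2]; rfl
            · have : G.Adj (φ i) (φ j) := (hφ i j).mpr ((hadj i j).mpr ⟨hij, h0⟩)
              rw [SimpleGraph.dist_eq_one_iff_adj.mpr this]
              have hnp : ¬((i = 2 ∧ j = 3) ∨ (i = 3 ∧ j = 2)) := fun hc => h0 ((hpair i j).mpr hc)
              fin_cases i <;> fin_cases j <;>
                first
                | rfl
                | exact (hij rfl).elim
                | exact (hnp (Or.inl ⟨rfl, rfl⟩)).elim
                | exact (hnp (Or.inr ⟨rfl, rfl⟩)).elim
        have hc1 : ∑ i, cD i ^ 2 = 1 := by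
          simp [Fin.sum_univ_four, cD, Matrix.vecHead, Matrix.vecTail]
          norm_num
        have hc0 : ∑ i, cD i = 0 := by
          simp [Fin.sum_univ_four, cD, Matrix.vecHead, Matrix.vecTail]
          ring
        obtain ⟨f, hf1, hf0, hfq⟩ := aux_mem_qec G φ cD dD hD hc1 hc0
        refine ⟨f, hf1, hf0, ?_⟩
        rw [← hfq]
        simp [Fin.sum_univ_four, cD, dD, Matrix.vecHead, Matrix.vecTail]
        norm_num
    exact le_csSup hb hmem
  · rw [QEC, ← hS, Real.sSup_of_not_bddAbove hb]
    norm_num
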